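/- Let β_t be the curve of length L(β_t) = (ℓ+t)/(2 sin(Y_{c₅}(ℓ+t))) (the length of the constant-distance circle at distance (w/2 − c₅) from the central geodesic in the collar around a geodesic of length ℓ+t). Then |d/dt L(β_t)|_{t=0}| = |(sin Y_{c₅}(ℓ) − ℓ Y_{c₅}′(ℓ) cos Y_{c₅}(ℓ)) / (2 sin² Y_{c₅}(ℓ))| ≤ C ℓ for all ℓ ∈ (0, L̄], C depending only on c₅ and L̄. -/

import Mathlib

open Real

/-- `Y_c(ℓ) = 2 arctan(e^c tan(½ arctan(sinh(ℓ/2))))`. -/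
noncomputable def Ycurve (c ℓ : ℝ) : ℝ :=
  2 * Real.arctan (Real.exp c * Real.tan (Real.arctan (Real.sinh (ℓ / 2)) / 2))

/-!
Since `tan (½ arctan (sinh s)) = tanh (s / 2)`, we have `Y_c(ℓ) = 2 arctan (k u)` with `k = e^c`
and `u = tanh (ℓ / 4)`, so `sin Y`, `cos Y` and `Y'` are rational in `u`. Writing `x = ℓ / 4`, the
derivative of the length becomes `(u (1 + k²u²) - x (1 - u²)(1 - k²u²)) / (4 k u²)`.
As `x - x³ ≤ u ≤ x`, the numerator is `O(x³)`, and as `x ≤ sinh x = u cosh x`, the denominator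
is bounded below by a multiple of `x²`; hence the quotient is `O(x) = O(ℓ)`.
-/

lemma nonneg_of_hasDerivAt_of_map_zero {f f' : ℝ → ℝ} (hf : ∀ x, HasDerivAt f (f' x) x)
    (hf' : ∀ x, 0 < x → 0 ≤ f' x) (h0 : f 0 = 0) {x : ℝ} (hx : 0 ≤ x) : 0 ≤ f x := by
  have hmono : MonotoneOn f (Set.Ici 0) :=
    monotoneOn_of_hasDerivWithinAt_nonneg (convex_Ici 0)
      (fun y _ => (hf y).continuousAt.continuousWithinAt) (fun y _ => (hf y).hasDerivWithinAt)
      (fun y hy => hf' y (by simpa using hy))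
  simpa [h0] using hmono Set.self_mem_Ici hx hx

namespace Real

lemma hasDerivAt_tanh (x : ℝ) : HasDerivAt tanh (1 - tanh x ^ 2) x := by
  have hcosh := (cosh_pos x).ne'
  have h := (hasDerivAt_sinh x).div (hasDerivAt_cosh x) hcosh
  rw [show sinh / cosh = tanh from funext fun y => (tanh_eq_sinh_div_cosh y).symm] at h
  refine h.congr_deriv ?_
  rw [tanh_eq_sinh_div_cosh]
  field_simp

lemma tanh_pos {x : ℝ} (hx : 0 < x) : 0 < tanh x := by
  rw [tanh_eq_sinh_div_cosh]
  exact div_pos (sinh_pos_iff.mpr hx) (cosh_pos x)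

lemma tanh_le_self {x : ℝ} (hx : 0 ≤ x) : tanh x ≤ x := by
  have := nonneg_of_hasDerivAt_of_map_zero (fun y => (hasDerivAt_id y).sub (hasDerivAt_tanh y))
    (fun y _ => by simpa using sq_nonneg (tanh y)) (by simp) hx
  simpa using this

lemma self_sub_tanh_le_pow_three {x : ℝ} (hx : 0 ≤ x) : x - tanh x ≤ x ^ 3 := by
  have := nonneg_of_hasDerivAt_of_map_zero
    (fun y => ((hasDerivAt_pow 3 y).add (hasDerivAt_tanh y)).sub (hasDerivAt_id y))
    (fun y hy => by
      have := tanh_le_self hy.le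
      have := tanh_pos hy
      norm_num
      nlinarith) (by simp) hx
  simp only [Pi.add_apply, Pi.sub_apply, id] at this
  linarith

lemma self_le_tanh_mul_cosh {x : ℝ} (hx : 0 ≤ x) : x ≤ tanh x * cosh x := by
  rw [tanh_eq_sinh_div_cosh, div_mul_cancel₀ _ (cosh_pos x).ne']
  exact self_le_sinh_iff.mpr hx

lemma two_mul_tanh_div_one_sub_tanh_sq (x : ℝ) :
    2 * tanh x / (1 - tanh x ^ 2) = sinh (2 * x) := by
  have hcosh := (cosh_pos x).ne'
  rw [tanh_eq_sinh_div_cosh, sinh_two_mul]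
  have := cosh_sq_sub_sinh_sq x
  field_simp
  rw [this, mul_one]

lemma tan_half_arctan_sinh (x : ℝ) : tan (arctan (sinh x) / 2) = tanh (x / 2) := by
  have h := two_mul_tanh_div_one_sub_tanh_sq (x / 2)
  rw [mul_div_cancel₀ x two_ne_zero] at h
  rw [← h, ← two_mul_arctan (neg_one_lt_tanh _) (tanh_lt_one _),
    mul_div_cancel_left₀ _ two_ne_zero, tan_arctan]

lemma sin_two_mul_arctan (v : ℝ) : sin (2 * arctan v) = 2 * v / (1 + v ^ 2) := by
  rw [sin_two_mul, ← tan_mul_cos (cos_arctan_pos v).ne', mul_assoc, mul_assoc, ← sq,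
    cos_sq_arctan, tan_arctan]
  ring

lemma cos_two_mul_arctan (v : ℝ) : cos (2 * arctan v) = (1 - v ^ 2) / (1 + v ^ 2) := by
  rw [cos_two_mul, cos_sq_arctan]
  field_simp
  ring

end Real

lemma Ycurve_eq_two_mul_arctan (c ℓ : ℝ) : Ycurve c ℓ = 2 * arctan (exp c * tanh (ℓ / 4)) := by
  rw [Ycurve, tan_half_arctan_sinh, div_div]
  norm_num

lemma hasDerivAt_Ycurve (c ℓ : ℝ) :
    HasDerivAt (Ycurve c)
      (exp c * (1 - tanh (ℓ / 4) ^ 2) / (2 * (1 + exp c ^ 2 * tanh (ℓ / 4) ^ 2))) ℓ := by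
  rw [show Ycurve c = fun s => 2 * arctan (exp c * tanh (s / 4)) from
    funext (Ycurve_eq_two_mul_arctan c)]
  have h := ((((hasDerivAt_tanh (ℓ / 4)).comp ℓ ((hasDerivAt_id ℓ).div_const 4)).const_mul
    (exp c)).arctan).const_mul 2
  simp only [Function.comp_apply, id_eq] at h
  refine h.congr_deriv ?_
  field_simp
  ring

lemma sin_Ycurve_pos (c : ℝ) {ℓ : ℝ} (hℓ : 0 < ℓ) : 0 < sin (Ycurve c ℓ) := by
  have := tanh_pos (by positivity : 0 < ℓ / 4)
  rw [Ycurve_eq_two_mul_arctan, sin_two_mul_arctan]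
  positivity

lemma hasDerivAt_div_two_sin {Y : ℝ → ℝ} {D ℓ : ℝ} (hY : HasDerivAt Y D ℓ)
    (hs : sin (Y ℓ) ≠ 0) :
    HasDerivAt (fun s => s / (2 * sin (Y s)))
      ((sin (Y ℓ) - ℓ * D * cos (Y ℓ)) / (2 * sin (Y ℓ) ^ 2)) ℓ := by
  have h := (hasDerivAt_id' ℓ).div (hY.sin.const_mul 2) (mul_ne_zero two_ne_zero hs)
  refine h.congr_deriv ?_
  field_simp

lemma two_mul_arctan_length_deriv_eq {k u ℓ : ℝ} (hk : k ≠ 0) (hu : u ≠ 0) :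
    (sin (2 * arctan (k * u)) - ℓ * (k * (1 - u ^ 2) / (2 * (1 + k ^ 2 * u ^ 2)))
        * cos (2 * arctan (k * u))) / (2 * sin (2 * arctan (k * u)) ^ 2)
      = (u * (1 + k ^ 2 * u ^ 2) - ℓ / 4 * (1 - u ^ 2) * (1 - k ^ 2 * u ^ 2))
        / (4 * k * u ^ 2) := by
  rw [sin_two_mul_arctan, cos_two_mul_arctan]
  field_simp
  ring

lemma abs_length_deriv_numerator_le {k u x : ℝ} (hu : 0 ≤ u) (hu1 : u ≤ 1) (hux : u ≤ x)
    (hxu : x - u ≤ x ^ 3) :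
    |u * (1 + k ^ 2 * u ^ 2) - x * (1 - u ^ 2) * (1 - k ^ 2 * u ^ 2)|
      ≤ (1 + 2 * k ^ 2) * x ^ 3 := by
  have hx : 0 ≤ x := hu.trans hux
  have hu2 : u ^ 2 ≤ x ^ 2 := pow_le_pow_left₀ hu hux 2
  have hu3 : u ^ 3 ≤ x ^ 3 := pow_le_pow_left₀ hu hux 3
  have hxu2 : x * u ^ 2 ≤ x ^ 3 := by nlinarith
  have hxu2_nonneg : 0 ≤ x * u ^ 2 := by positivity
  have hquartic_nonneg : 0 ≤ x * u ^ 2 * (1 - u ^ 2) :=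
    mul_nonneg hxu2_nonneg (sub_nonneg.2 (pow_le_one₀ hu hu1))
  have hquartic : x * u ^ 2 * (1 - u ^ 2) ≤ x ^ 3 := by nlinarith
  have hM : u * (1 + k ^ 2 * u ^ 2) - x * (1 - u ^ 2) * (1 - k ^ 2 * u ^ 2)
      = (u - x) + k ^ 2 * u ^ 3 + x * u ^ 2 + k ^ 2 * (x * u ^ 2 * (1 - u ^ 2)) := by ring
  rw [hM, abs_le]
  have := mul_le_mul_of_nonneg_left hu3 (sq_nonneg k)
  have := mul_le_mul_of_nonneg_left hquartic (sq_nonneg k)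
  have := mul_nonneg (sq_nonneg k) (pow_nonneg hu 3)
  have := mul_nonneg (sq_nonneg k) hquartic_nonneg
  constructor <;> linarith

lemma abs_length_deriv_le (c : ℝ) {L ℓ : ℝ} (hℓ : 0 < ℓ) (hℓL : ℓ ≤ L) :
    |(sin (Ycurve c ℓ) - ℓ * deriv (Ycurve c) ℓ * cos (Ycurve c ℓ)) / (2 * sin (Ycurve c ℓ) ^ 2)|
      ≤ (1 + 2 * exp c ^ 2) * cosh (L / 4) ^ 2 / (16 * exp c) * ℓ := by
  set k := exp c
  set x := ℓ / 4 with hx_def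
  set u := tanh x
  have hk : 0 < k := exp_pos c
  have hx : 0 < x := by positivity
  have hu : 0 < u := tanh_pos hx
  have hnum : |u * (1 + k ^ 2 * u ^ 2) - x * (1 - u ^ 2) * (1 - k ^ 2 * u ^ 2)|
      ≤ (1 + 2 * k ^ 2) * x ^ 3 :=
    abs_length_deriv_numerator_le hu.le (tanh_lt_one x).le (tanh_le_self hx.le)
      (self_sub_tanh_le_pow_three hx.le)
  have hcosh : x ≤ u * cosh (L / 4) := by
    refine (self_le_tanh_mul_cosh hx.le).trans (mul_le_mul_of_nonneg_left ?_ hu.le)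
    rw [cosh_le_cosh, abs_of_pos hx, abs_of_pos (by linarith)]
    linarith
  rw [(hasDerivAt_Ycurve c ℓ).deriv, Ycurve_eq_two_mul_arctan,
    two_mul_arctan_length_deriv_eq hk.ne' hu.ne', ← hx_def, abs_div,
    abs_of_pos (by positivity : (0 : ℝ) < 4 * k * u ^ 2), div_le_iff₀ (by positivity)]
  calc _ ≤ (1 + 2 * k ^ 2) * x ^ 3 := hnum
    _ = (1 + 2 * k ^ 2) * x * x ^ 2 := by ring
    _ ≤ (1 + 2 * k ^ 2) * x * (u * cosh (L / 4)) ^ 2 := by gcongr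
    _ = _ := by
      rw [hx_def]
      field_simp
      ring

theorem boundary_circle_length_variation_bound_general (c₅ Lbar : ℝ) :
    ∃ C : ℝ, 0 < C ∧ ∀ ℓ : ℝ, 0 < ℓ → ℓ ≤ Lbar →
      |deriv (fun t => (ℓ + t) / (2 * Real.sin (Ycurve c₅ (ℓ + t)))) 0|
          = |(Real.sin (Ycurve c₅ ℓ) - ℓ * deriv (Ycurve c₅) ℓ * Real.cos (Ycurve c₅ ℓ))
              / (2 * (Real.sin (Ycurve c₅ ℓ)) ^ 2)| ∧
      |deriv (fun t => (ℓ + t) / (2 * Real.sin (Ycurve c₅ (ℓ + t)))) 0| ≤ C * ℓ := by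
  refine ⟨(1 + 2 * exp c₅ ^ 2) * cosh (Lbar / 4) ^ 2 / (16 * exp c₅), by positivity,
    fun ℓ hℓ hℓL => ?_⟩
  have hlength := hasDerivAt_div_two_sin (hasDerivAt_Ycurve c₅ ℓ).differentiableAt.hasDerivAt
    (sin_Ycurve_pos c₅ hℓ).ne'
  rw [deriv_comp_const_add (f := fun s => s / (2 * sin (Ycurve c₅ s))), add_zero, hlength.deriv]
  exact ⟨rfl, abs_length_deriv_le c₅ hℓ hℓL⟩

/-- Let `L(β_t) = (ℓ+t)/(2 sin(Y_{c₅}(ℓ+t)))` be the length of the constant-distance circle in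
the collar around a geodesic of length `ℓ+t`. Then
`|d/dt L(β_t)|_{t=0}| = |(sin Y_{c₅}(ℓ) − ℓ Y_{c₅}′(ℓ) cos Y_{c₅}(ℓ))/(2 sin² Y_{c₅}(ℓ))| ≤ C ℓ`
for all `ℓ ∈ (0, L̄]`, with `C` depending only on `c₅` and `L̄`. -/
theorem boundary_circle_length_variation_bound (c₅ Lbar : ℝ) (hc : 0 < c₅) (hL : 0 < Lbar) :
    ∃ C : ℝ, 0 < C ∧ ∀ ℓ : ℝ, 0 < ℓ → ℓ ≤ Lbar →
      |deriv (fun t => (ℓ + t) / (2 * Real.sin (Ycurve c₅ (ℓ + t)))) 0|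
          = |(Real.sin (Ycurve c₅ ℓ) - ℓ * deriv (Ycurve c₅) ℓ * Real.cos (Ycurve c₅ ℓ))
              / (2 * (Real.sin (Ycurve c₅ ℓ)) ^ 2)| ∧
      |deriv (fun t => (ℓ + t) / (2 * Real.sin (Ycurve c₅ (ℓ + t)))) 0| ≤ C * ℓ :=
  boundary_circle_length_variation_bound_general c₅ Lbar
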